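/- arXiv:2302.09704 — 2 statements merged into one kernel-verified Lean document; each statement's English description precedes it below -/
import Mathlib

section
/- Ellipsoid collision certificate: let A = {x : ⟪x, P⁻¹x⟫ ≤ 1} and B = {x : ⟪x, Q⁻¹x⟫ ≤ 1} with P, Q symmetric positive definite, let R, S be linear isometries and p, d ∈ ℝⁿ, and γ ∈ ℝ. Then sd(R·A + p, S·B + d) ≥ γ if and only if there exists c ∈ ℝⁿ with ‖c‖ = 1 and γ ≤ −√(⟪c, R P Rᵀ c⟫) − √(⟪c, S Q Sᵀ c⟫) + ⟪c, p − d⟫. -/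
open scoped RealInnerProductSpace Pointwise

noncomputable def costFn {n : ℕ} (C : Set (EuclideanSpace ℝ (Fin n)))
    (c : EuclideanSpace ℝ (Fin n)) : ℝ :=
  sInf ((fun x => ⟪c, x⟫) '' C)

noncomputable def suppFn {n : ℕ} (T : Set (EuclideanSpace ℝ (Fin n)))
    (c : EuclideanSpace ℝ (Fin n)) : ℝ :=
  sSup ((fun x => ⟪c, x⟫) '' T)

open Classical in
noncomputable def sd {n : ℕ} (C D : Set (EuclideanSpace ℝ (Fin n))) : ℝ :=
  if Disjoint C D then sInf {r | ∃ x ∈ C, ∃ y ∈ D, r = ‖x - y‖}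
  else - sInf {r | ∃ t : EuclideanSpace ℝ (Fin n), ‖t‖ = r ∧ Disjoint ((· + t) '' C) D}
/-!
With `P = Bᴴ * B`, the ellipsoid of `P` is the image of the unit ball under `Bᴴ`, so its support
value in direction `w` is `‖B w‖ = √⟪w, P w⟫`; the motion `x ↦ R x + p` turns direction `c` into
`R⁻¹ c` and adds `⟪c, p⟫`. What remains is strong duality for compact convex `C`, `D`: the signed
distance is the maximum over unit `c` of `inf_C ⟪c, ·⟫ - sup_D ⟪c, ·⟫`. Every direction is a lower
bound, since `⟪c, x - y⟫ ≤ ‖x - y‖` and `s • c` separates the sets as soon as `s` exceeds the gap.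
For disjoint sets the direction of a nearest pair attains the distance (projection onto the convex
set `D - C`). For overlapping sets the direction minimising the gap on the sphere attains the
penetration depth: a separating translation `t` lies outside `D - C`, and a hyperplane separating
`t` from `D - C` has a unit normal whose gap is at most `‖t‖`.
-/

open scoped Matrix MatrixOrder

open Metric

section InnerProductSpace

variable {E F : Type*} [NormedAddCommGroup E] [InnerProductSpace ℝ E]
  [NormedAddCommGroup F] [InnerProductSpace ℝ F]

lemma isGreatest_image_inner_closedBall (v : E) :
    IsGreatest ((fun u => ⟪v, u⟫) '' closedBall 0 1) ‖v‖ := by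
  refine ⟨⟨‖v‖⁻¹ • v, ?_, ?_⟩, ?_⟩
  · rw [mem_closedBall_zero_iff, norm_smul, norm_inv, norm_norm]
    exact inv_mul_le_one
  · change ⟪v, ‖v‖⁻¹ • v⟫ = ‖v‖
    rw [real_inner_smul_right, real_inner_self_eq_norm_sq, sq, ← mul_assoc, inv_mul_mul_self]
  · rintro _ ⟨u, hu, rfl⟩
    calc ⟪v, u⟫ ≤ ‖v‖ * ‖u‖ := real_inner_le_norm v u
      _ ≤ ‖v‖ * 1 := by gcongr; exact mem_closedBall_zero_iff.mp hu
      _ = ‖v‖ := mul_one _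

lemma isLeast_image_inner_closedBall (v : E) :
    IsLeast ((fun u => ⟪v, u⟫) '' closedBall 0 1) (-‖v‖) := by
  obtain ⟨⟨u₀, hu₀, hv⟩, hle⟩ := isGreatest_image_inner_closedBall v
  refine ⟨⟨-u₀, by simpa using hu₀, by simpa [inner_neg_right] using hv⟩, ?_⟩
  rintro _ ⟨u, hu, rfl⟩
  have := hle ⟨-u, by simpa using hu, rfl⟩
  simp only [inner_neg_right] at this
  linarith

lemma LinearIsometryEquiv.inner_map_right (R : E ≃ₗᵢ[ℝ] F) (c : F) (x : E) :
    ⟪c, R x⟫ = ⟪R.symm c, x⟫ := by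
  rw [← R.inner_map_map, R.apply_symm_apply]

lemma image_inner_image_isometry_add (R : E ≃ₗᵢ[ℝ] F) (p c : F) (A : Set E) :
    (fun y => ⟪c, y⟫) '' ((fun x => R x + p) '' A)
      = (· + ⟪c, p⟫) '' ((fun x => ⟪R.symm c, x⟫) '' A) := by
  simp only [Set.image_image, inner_add_right, R.inner_map_right]

lemma exists_norm_eq_one_inner_lt_of_notMem [CompleteSpace E] {K : Set E} {t : E}
    (hKcv : Convex ℝ K) (hKc : IsClosed K) (hKne : K.Nonempty) (ht : t ∉ K) :
    ∃ c : E, ‖c‖ = 1 ∧ ∀ z ∈ K, ⟪c, z⟫ < ⟪c, t⟫ := by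
  obtain ⟨f, u, hfK, hft⟩ := geometric_hahn_banach_closed_point hKcv hKc ht
  set v := (InnerProductSpace.toDual ℝ E).symm f
  have hv : ∀ x, ⟪v, x⟫ = f x := fun x => InnerProductSpace.toDual_symm_apply
  have hv₀ : v ≠ 0 := by
    rintro h
    obtain ⟨z, hz⟩ := hKne
    have := (hfK z hz).trans hft
    simp only [← hv, h, inner_zero_left, lt_self_iff_false] at this
  refine ⟨‖v‖⁻¹ • v, norm_smul_inv_norm hv₀, fun z hz => ?_⟩
  rw [real_inner_smul_left, real_inner_smul_left, hv, hv]
  exact mul_lt_mul_of_pos_left ((hfK z hz).trans hft) (inv_pos.mpr (norm_pos_iff.mpr hv₀))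

lemma sq_norm_le_inner_of_isMinOn_norm {K : Set E} {z₀ z : E} (hK : Convex ℝ K)
    (hz₀ : z₀ ∈ K) (hmin : IsMinOn (‖·‖) K z₀) (hz : z ∈ K) : ‖z₀‖ ^ 2 ≤ ⟪z₀, z⟫ := by
  have hbdd : BddBelow (Set.range fun w : K => ‖0 - (w : E)‖) :=
    ⟨0, by rintro _ ⟨w, rfl⟩; exact norm_nonneg _⟩
  have hinf : ‖0 - z₀‖ = ⨅ w : K, ‖0 - (w : E)‖ := by
    have : Nonempty K := ⟨⟨z₀, hz₀⟩⟩
    refine le_antisymm (le_ciInf fun w => ?_) (ciInf_le hbdd ⟨z₀, hz₀⟩)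
    simpa using hmin w.2
  have := (norm_eq_iInf_iff_real_inner_le_zero hK hz₀).mp hinf z hz
  rw [zero_sub, inner_neg_left, inner_sub_right, real_inner_self_eq_norm_sq] at this
  linarith

end InnerProductSpace

section Ellipsoid

variable {n : ℕ}

lemma Matrix.toEuclideanLin_mul_apply (A B : Matrix (Fin n) (Fin n) ℝ)
    (x : EuclideanSpace ℝ (Fin n)) :
    toEuclideanLin (A * B) x = toEuclideanLin A (toEuclideanLin B x) := by
  rw [toLpLin_mul]
  rfl

lemma Matrix.inner_toEuclideanLin_conjTranspose (A : Matrix (Fin n) (Fin n) ℝ)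
    (x y : EuclideanSpace ℝ (Fin n)) :
    ⟪x, toEuclideanLin Aᴴ y⟫ = ⟪toEuclideanLin A x, y⟫ := by
  rw [toEuclideanLin_conjTranspose_eq_adjoint, LinearMap.adjoint_inner_right]

lemma Matrix.inner_toEuclideanLin_conjTranspose_mul_self (B : Matrix (Fin n) (Fin n) ℝ)
    (x : EuclideanSpace ℝ (Fin n)) :
    ⟪x, toEuclideanLin (Bᴴ * B) x⟫ = ‖toEuclideanLin B x‖ ^ 2 := by
  rw [toEuclideanLin_mul_apply, inner_toEuclideanLin_conjTranspose, real_inner_self_eq_norm_sq]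

lemma Matrix.PosDef.exists_isUnit_eq_conjTranspose_mul_self {P : Matrix (Fin n) (Fin n) ℝ}
    (hP : P.PosDef) : ∃ B : Matrix (Fin n) (Fin n) ℝ, IsUnit B ∧ P = Bᴴ * B := by
  obtain ⟨B, rfl⟩ := CStarAlgebra.nonneg_iff_eq_star_mul_self.mp hP.posSemidef.nonneg
  refine ⟨B, ?_, rfl⟩
  have := hP.isUnit
  rw [isUnit_iff_isUnit_det, det_mul] at this
  rw [isUnit_iff_isUnit_det]
  exact isUnit_of_mul_isUnit_right this

def ellipsoid (P : Matrix (Fin n) (Fin n) ℝ) : Set (EuclideanSpace ℝ (Fin n)) :=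
  {x | ⟪x, Matrix.toEuclideanLin P⁻¹ x⟫ ≤ 1}

lemma zero_mem_ellipsoid (P : Matrix (Fin n) (Fin n) ℝ) : 0 ∈ ellipsoid P := by
  simp [ellipsoid]

lemma ellipsoid_conjTranspose_mul_self {B : Matrix (Fin n) (Fin n) ℝ} (hB : IsUnit B) :
    ellipsoid (Bᴴ * B) = Matrix.toEuclideanLin Bᴴ '' closedBall 0 1 := by
  have hdet : IsUnit Bᴴ.det := (Matrix.isUnit_iff_isUnit_det _).mp hB.star
  have hinv : (Bᴴ * B)⁻¹ = (Bᴴ⁻¹)ᴴ * Bᴴ⁻¹ := by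
    rw [Matrix.mul_inv_rev, Matrix.conjTranspose_nonsing_inv, Matrix.conjTranspose_conjTranspose]
  rw [Set.image_eq_preimage_of_inverse (g := Matrix.toEuclideanLin Bᴴ⁻¹)]
  · ext x
    rw [ellipsoid, Set.mem_preimage, mem_closedBall_zero_iff, ← sq_le_one_iff₀ (norm_nonneg _),
      ← Matrix.inner_toEuclideanLin_conjTranspose_mul_self, ← hinv]
    rfl
  · intro x
    rw [← Matrix.toEuclideanLin_mul_apply, Matrix.nonsing_inv_mul _ hdet]
    simp
  · intro x
    rw [← Matrix.toEuclideanLin_mul_apply, Matrix.mul_nonsing_inv _ hdet]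
    simp

lemma image_inner_ellipsoid_conjTranspose_mul_self {B : Matrix (Fin n) (Fin n) ℝ} (hB : IsUnit B)
    (w : EuclideanSpace ℝ (Fin n)) : (fun x => ⟪w, x⟫) '' ellipsoid (Bᴴ * B)
      = (fun u => ⟪Matrix.toEuclideanLin B w, u⟫) '' closedBall 0 1 := by
  simp only [ellipsoid_conjTranspose_mul_self hB, Set.image_image,
    Matrix.inner_toEuclideanLin_conjTranspose]

lemma isGreatest_image_inner_ellipsoid {P : Matrix (Fin n) (Fin n) ℝ} (hP : P.PosDef)
    (w : EuclideanSpace ℝ (Fin n)) :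
    IsGreatest ((fun x => ⟪w, x⟫) '' ellipsoid P) √⟪w, Matrix.toEuclideanLin P w⟫ := by
  obtain ⟨B, hB, rfl⟩ := hP.exists_isUnit_eq_conjTranspose_mul_self
  rw [image_inner_ellipsoid_conjTranspose_mul_self hB,
    Matrix.inner_toEuclideanLin_conjTranspose_mul_self, Real.sqrt_sq (norm_nonneg _)]
  exact isGreatest_image_inner_closedBall _

lemma isLeast_image_inner_ellipsoid {P : Matrix (Fin n) (Fin n) ℝ} (hP : P.PosDef)
    (w : EuclideanSpace ℝ (Fin n)) :
    IsLeast ((fun x => ⟪w, x⟫) '' ellipsoid P) (-√⟪w, Matrix.toEuclideanLin P w⟫) := by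
  obtain ⟨B, hB, rfl⟩ := hP.exists_isUnit_eq_conjTranspose_mul_self
  rw [image_inner_ellipsoid_conjTranspose_mul_self hB,
    Matrix.inner_toEuclideanLin_conjTranspose_mul_self, Real.sqrt_sq (norm_nonneg _)]
  exact isLeast_image_inner_closedBall _

lemma isCompact_ellipsoid {P : Matrix (Fin n) (Fin n) ℝ} (hP : P.PosDef) :
    IsCompact (ellipsoid P) := by
  obtain ⟨B, hB, rfl⟩ := hP.exists_isUnit_eq_conjTranspose_mul_self
  rw [ellipsoid_conjTranspose_mul_self hB]
  exact (isCompact_closedBall 0 1).image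
    (Matrix.toEuclideanLin Bᴴ).continuous_of_finiteDimensional

lemma convex_ellipsoid {P : Matrix (Fin n) (Fin n) ℝ} (hP : P.PosDef) :
    Convex ℝ (ellipsoid P) := by
  obtain ⟨B, hB, rfl⟩ := hP.exists_isUnit_eq_conjTranspose_mul_self
  rw [ellipsoid_conjTranspose_mul_self hB]
  exact (convex_closedBall 0 1).linear_image _

end Ellipsoid

section SignedDistance

variable {n : ℕ} {C D : Set (EuclideanSpace ℝ (Fin n))} {c x y : EuclideanSpace ℝ (Fin n)}

lemma costFn_le_inner (hC : IsCompact C) (hx : x ∈ C) : costFn C c ≤ ⟪c, x⟫ :=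
  csInf_le (hC.image (continuous_const.inner continuous_id)).bddBelow ⟨x, hx, rfl⟩

lemma inner_le_suppFn (hD : IsCompact D) (hy : y ∈ D) : ⟪c, y⟫ ≤ suppFn D c :=
  le_csSup (hD.image (continuous_const.inner continuous_id)).bddAbove ⟨y, hy, rfl⟩

lemma inner_sub_le_suppFn_sub_costFn (hC : IsCompact C) (hD : IsCompact D) (hx : x ∈ C)
    (hy : y ∈ D) : ⟪c, y - x⟫ ≤ suppFn D c - costFn C c := by
  rw [inner_sub_right]
  linarith [costFn_le_inner (c := c) hC hx, inner_le_suppFn (c := c) hD hy]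

lemma suppFn_sub_costFn_le (hC : C.Nonempty) (hD : D.Nonempty) {m : ℝ}
    (h : ∀ x ∈ C, ∀ y ∈ D, ⟪c, y - x⟫ ≤ m) : suppFn D c - costFn C c ≤ m := by
  suffices suppFn D c ≤ m + costFn C c by linarith
  refine csSup_le (hD.image _) ?_
  rintro _ ⟨y, hy, rfl⟩
  suffices ⟪c, y⟫ - m ≤ costFn C c by linarith
  refine le_csInf (hC.image _) ?_
  rintro _ ⟨x, hx, rfl⟩
  have := h x hx y hy
  rw [inner_sub_right] at this
  linarith

lemma continuous_suppFn (hD : IsCompact D) : Continuous (suppFn D) :=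
  hD.continuous_sSup (f := fun c x => ⟪c, x⟫) continuous_inner

lemma continuous_costFn (hC : IsCompact C) : Continuous (costFn C) :=
  hC.continuous_sInf (f := fun c x => ⟪c, x⟫) continuous_inner

lemma disjoint_image_add_smul (hC : IsCompact C) (hD : IsCompact D) (hc : ‖c‖ = 1) {s : ℝ}
    (hs : suppFn D c - costFn C c < s) : Disjoint ((· + s • c) '' C) D := by
  rw [Set.disjoint_left]
  rintro _ ⟨x, hx, rfl⟩ hy
  have := inner_sub_le_suppFn_sub_costFn (c := c) hC hD hx hy
  rw [add_sub_cancel_left, real_inner_smul_right, real_inner_self_eq_norm_sq, hc] at this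
  linarith

lemma notMem_sub_of_disjoint_image_add {t : EuclideanSpace ℝ (Fin n)}
    (h : Disjoint ((· + t) '' C) D) : t ∉ D - C := by
  rintro ⟨y, hy, x, hx, rfl⟩
  exact Set.disjoint_left.mp h ⟨x, hx, add_sub_cancel x y⟩ hy

lemma bddBelow_setOf_norm_disjoint_image_add :
    BddBelow {r | ∃ t : EuclideanSpace ℝ (Fin n), ‖t‖ = r ∧ Disjoint ((· + t) '' C) D} :=
  ⟨0, by rintro _ ⟨t, rfl, -⟩; exact norm_nonneg t⟩

lemma costFn_sub_suppFn_le_sd (hC : IsCompact C) (hCne : C.Nonempty) (hD : IsCompact D)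
    (hDne : D.Nonempty) (hc : ‖c‖ = 1) : costFn C c - suppFn D c ≤ sd C D := by
  rw [sd]
  split_ifs with hCD
  · obtain ⟨x₀, hx₀⟩ := hCne
    obtain ⟨y₀, hy₀⟩ := hDne
    refine le_csInf ⟨_, x₀, hx₀, y₀, hy₀, rfl⟩ ?_
    rintro _ ⟨x, hx, y, hy, rfl⟩
    have h₁ := inner_sub_le_suppFn_sub_costFn (c := c) hC hD hx hy
    have h₂ : ⟪c, x - y⟫ ≤ ‖x - y‖ := by simpa [hc] using real_inner_le_norm c (x - y)
    rw [inner_sub_right] at h₁ h₂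
    linarith
  · obtain ⟨z, hzC, hzD⟩ := Set.not_disjoint_iff.mp hCD
    have hgap : 0 ≤ suppFn D c - costFn C c := by
      simpa using inner_sub_le_suppFn_sub_costFn (c := c) hC hD hzC hzD
    suffices sInf {r | ∃ t, ‖t‖ = r ∧ Disjoint ((· + t) '' C) D} ≤ suppFn D c - costFn C c by
      linarith
    refine le_of_forall_gt_imp_ge_of_dense fun s hs =>
      csInf_le bddBelow_setOf_norm_disjoint_image_add ⟨s • c, ?_, disjoint_image_add_smul hC hD hc hs⟩
    rw [norm_smul, hc, mul_one, Real.norm_of_nonneg (hgap.trans hs.le)]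

lemma exists_sd_le_of_disjoint (hC : IsCompact C) (hCcv : Convex ℝ C) (hCne : C.Nonempty)
    (hD : IsCompact D) (hDcv : Convex ℝ D) (hDne : D.Nonempty) (hCD : Disjoint C D) :
    ∃ c, ‖c‖ = 1 ∧ sd C D ≤ costFn C c - suppFn D c := by
  have hK : IsCompact (D - C) := by
    rw [← Set.image2_sub, ← Set.image_prod]
    exact (hD.prod hC).image continuous_sub
  obtain ⟨z₀, hz₀, hmin⟩ := hK.exists_isMinOn (hDne.sub hCne) continuous_norm.continuousOn
  obtain ⟨y₀, hy₀, x₀, hx₀, rfl⟩ := hz₀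
  have hne : x₀ - y₀ ≠ 0 := sub_ne_zero.mpr fun h => Set.disjoint_left.mp hCD hx₀ (h ▸ hy₀)
  have hδ : 0 < ‖x₀ - y₀‖ := norm_pos_iff.mpr hne
  refine ⟨‖x₀ - y₀‖⁻¹ • (x₀ - y₀), norm_smul_inv_norm hne, ?_⟩
  have hsd : sd C D ≤ ‖x₀ - y₀‖ := by
    rw [sd, if_pos hCD]
    exact csInf_le ⟨0, by rintro _ ⟨x, -, y, -, rfl⟩; exact norm_nonneg _⟩
      ⟨x₀, hx₀, y₀, hy₀, rfl⟩
  suffices suppFn D _ - costFn C _ ≤ -‖x₀ - y₀‖ by linarith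
  refine suppFn_sub_costFn_le hCne hDne fun x hx y hy => ?_
  have hvar : ‖y₀ - x₀‖ ^ 2 ≤ ⟪y₀ - x₀, y - x⟫ :=
    sq_norm_le_inner_of_isMinOn_norm (hDcv.sub hCcv) ⟨y₀, hy₀, x₀, hx₀, rfl⟩ hmin
      ⟨y, hy, x, hx, rfl⟩
  rw [real_inner_smul_left, inv_mul_le_iff₀ hδ, ← neg_sub y₀ x₀, inner_neg_left, norm_neg]
  linarith

lemma exists_sd_le_of_not_disjoint (hn : 0 < n) (hC : IsCompact C) (hCcv : Convex ℝ C)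
    (hD : IsCompact D) (hDcv : Convex ℝ D) (hCD : ¬Disjoint C D) :
    ∃ c, ‖c‖ = 1 ∧ sd C D ≤ costFn C c - suppFn D c := by
  have : Nonempty (Fin n) := ⟨⟨0, hn⟩⟩
  obtain ⟨c, hc, hmin⟩ := (isCompact_sphere (0 : EuclideanSpace ℝ (Fin n)) 1).exists_isMinOn
    (NormedSpace.sphere_nonempty.mpr zero_le_one)
    ((continuous_suppFn hD).sub (continuous_costFn hC)).continuousOn
  rw [mem_sphere_zero_iff_norm] at hc
  refine ⟨c, hc, ?_⟩
  obtain ⟨z, hzC, hzD⟩ := Set.not_disjoint_iff.mp hCD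
  have hK : IsClosed (D - C) := by
    rw [← Set.image2_sub, ← Set.image_prod]
    exact ((hD.prod hC).image continuous_sub).isClosed
  have hlb : ∀ r ∈ {r | ∃ t, ‖t‖ = r ∧ Disjoint ((· + t) '' C) D},
      suppFn D c - costFn C c ≤ r := by
    rintro _ ⟨t, rfl, ht⟩
    obtain ⟨e, he, hsep⟩ := exists_norm_eq_one_inner_lt_of_notMem (hDcv.sub hCcv) hK
      ⟨z - z, z, hzD, z, hzC, rfl⟩ (notMem_sub_of_disjoint_image_add ht)
    calc suppFn D c - costFn C c ≤ suppFn D e - costFn C e :=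
          hmin (mem_sphere_zero_iff_norm.mpr he)
      _ ≤ ⟪e, t⟫ := suppFn_sub_costFn_le ⟨z, hzC⟩ ⟨z, hzD⟩ fun x hx y hy =>
          (hsep _ ⟨y, hy, x, hx, rfl⟩).le
      _ ≤ ‖t‖ := by simpa [he] using real_inner_le_norm e t
  have hne : {r | ∃ t, ‖t‖ = r ∧ Disjoint ((· + t) '' C) D}.Nonempty :=
    ⟨_, _, rfl, disjoint_image_add_smul hC hD hc (lt_add_one _)⟩
  rw [sd, if_neg hCD]
  linarith [le_csInf hne hlb]

theorem le_sd_iff_exists_costFn_sub_suppFn (hn : 0 < n) (hC : IsCompact C) (hCcv : Convex ℝ C)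
    (hCne : C.Nonempty) (hD : IsCompact D) (hDcv : Convex ℝ D) (hDne : D.Nonempty) (γ : ℝ) :
    γ ≤ sd C D ↔ ∃ c, ‖c‖ = 1 ∧ γ ≤ costFn C c - suppFn D c := by
  refine ⟨fun hγ => ?_, fun ⟨c, hc, hγ⟩ => hγ.trans (costFn_sub_suppFn_le_sd hC hCne hD hDne hc)⟩
  obtain ⟨c, hc, hsd⟩ : ∃ c, ‖c‖ = 1 ∧ sd C D ≤ costFn C c - suppFn D c := by
    by_cases hCD : Disjoint C D
    · exact exists_sd_le_of_disjoint hC hCcv hCne hD hDcv hDne hCD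
    · exact exists_sd_le_of_not_disjoint hn hC hCcv hD hDcv hCD
  exact ⟨c, hc, hγ.trans hsd⟩

end SignedDistance

section IsometricEllipsoid

variable {n : ℕ} {P : Matrix (Fin n) (Fin n) ℝ}
  (R : EuclideanSpace ℝ (Fin n) ≃ₗᵢ[ℝ] EuclideanSpace ℝ (Fin n)) (p c : EuclideanSpace ℝ (Fin n))

lemma costFn_image_isometry_add_ellipsoid (hP : P.PosDef) :
    costFn ((fun x => R x + p) '' ellipsoid P) c
      = -√⟪c, R (Matrix.toEuclideanLin P (R.symm c))⟫ + ⟪c, p⟫ := by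
  rw [costFn, image_inner_image_isometry_add, R.inner_map_right]
  exact (add_left_mono.map_isLeast (isLeast_image_inner_ellipsoid hP _)).csInf_eq

lemma suppFn_image_isometry_add_ellipsoid (hP : P.PosDef) :
    suppFn ((fun x => R x + p) '' ellipsoid P) c
      = √⟪c, R (Matrix.toEuclideanLin P (R.symm c))⟫ + ⟪c, p⟫ := by
  rw [suppFn, image_inner_image_isometry_add, R.inner_map_right]
  exact (add_left_mono.map_isGreatest (isGreatest_image_inner_ellipsoid hP _)).csSup_eq

lemma isCompact_image_isometry_add_ellipsoid (hP : P.PosDef) :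
    IsCompact ((fun x => R x + p) '' ellipsoid P) :=
  (isCompact_ellipsoid hP).image (by fun_prop)

lemma convex_image_isometry_add_ellipsoid (hP : P.PosDef) :
    Convex ℝ ((fun x => R x + p) '' ellipsoid P) :=
  (convex_ellipsoid hP).affine_image (R.toLinearMap.toAffineMap + AffineMap.const ℝ _ p)

end IsometricEllipsoid

theorem sd_ge_iff_ellipsoid_certificate {n : ℕ} (hn : 0 < n)
    (P Q : Matrix (Fin n) (Fin n) ℝ) (hP : P.PosDef) (hQ : Q.PosDef)
    (R S : EuclideanSpace ℝ (Fin n) ≃ₗᵢ[ℝ] EuclideanSpace ℝ (Fin n)) (p d : EuclideanSpace ℝ (Fin n)) (γ : ℝ) :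
    sd ((fun x => R x + p) '' {x : EuclideanSpace ℝ (Fin n) | ⟪x, Matrix.toEuclideanLin P⁻¹ x⟫ ≤ 1})
       ((fun x => S x + d) '' {x : EuclideanSpace ℝ (Fin n) | ⟪x, Matrix.toEuclideanLin Q⁻¹ x⟫ ≤ 1}) ≥ γ ↔
      ∃ c : EuclideanSpace ℝ (Fin n), ‖c‖ = 1 ∧
        γ ≤ - Real.sqrt ⟪c, R (Matrix.toEuclideanLin P (R.symm c))⟫
            - Real.sqrt ⟪c, S (Matrix.toEuclideanLin Q (S.symm c))⟫
            + ⟪c, p - d⟫ := by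
  change γ ≤ sd ((fun x => R x + p) '' ellipsoid P) ((fun x => S x + d) '' ellipsoid Q) ↔ _
  rw [le_sd_iff_exists_costFn_sub_suppFn hn
    (isCompact_image_isometry_add_ellipsoid R p hP) (convex_image_isometry_add_ellipsoid R p hP)
    ((Set.nonempty_of_mem (zero_mem_ellipsoid P)).image _)
    (isCompact_image_isometry_add_ellipsoid S d hQ) (convex_image_isometry_add_ellipsoid S d hQ)
    ((Set.nonempty_of_mem (zero_mem_ellipsoid Q)).image _)]
  refine exists_congr fun c => and_congr_right fun _ => ?_
  rw [costFn_image_isometry_add_ellipsoid R p c hP, suppFn_image_isometry_add_ellipsoid S d c hQ,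
    inner_sub_right]
  exact iff_of_eq (congrArg (γ ≤ ·) (by ring))
end

section
/- For nonempty compact convex C, D ⊆ ℝⁿ, the signed distance equals the supremum over unit vectors of the separation margin: sd(C, D) = sup{μ_C(c) − σ_D(c) : c ∈ ℝⁿ, ‖c‖ = 1}, and this supremum is attained. -/
/-!
Put `K = C - D`, a compact convex set with `0 ∈ K` iff `C` and `D` meet. The margin of `c` is
`min_{w ∈ K} ⟪c, w⟫`, and `sd C D` is `dist 0 K` if `0 ∉ K` and `-dist 0 Kᶜ` if `0 ∈ K`.
For a unit `c` the margin is at most `dist 0 K` because `⟪c, w⟫ ≤ ‖w‖`, and at most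
`-dist 0 Kᶜ` because `(m - ε) • c ∉ K` whenever `m` is the margin.
Attainment comes from the nearest-point map: for `q ∉ K` with nearest point `z ∈ K`, the unit
vector `c` along `z - q` satisfies `⟪c, q⟫ + dist q K ≤ ⟪c, w⟫` on `K`. With `q = 0` this
settles the disjoint case. Otherwise the continuous margin has a maximum on the compact unit
sphere, and taking `q = s` bounds that maximum below by `-‖s‖` for every `s ∉ K`.
-/

open scoped RealInnerProductSpace Pointwise

open Metric

theorem IsCompact.sub {G : Type*} [TopologicalSpace G] [AddGroup G] [IsTopologicalAddGroup G]
    {s t : Set G} (hs : IsCompact s) (ht : IsCompact t) : IsCompact (s - t) := by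
  rw [sub_eq_add_neg]
  exact hs.add ht.neg

theorem infDist_zero_eq_sInf_norm {E : Type*} [SeminormedAddCommGroup E] (s : Set E) :
    infDist 0 s = sInf (norm '' s) := by
  simp only [infDist_eq_iInf, dist_zero_left, sInf_image']

theorem disjoint_image_add_right_iff {G : Type*} [AddCommGroup G] {C D : Set G} {t : G} :
    Disjoint ((· + t) '' C) D ↔ -t ∉ C - D := by
  simp only [Set.disjoint_left, Set.forall_mem_image, Set.mem_sub, not_exists, not_and]
  refine forall₂_congr fun x _ => ⟨fun h y hy hxy => h ?_, fun h hxt => h _ hxt ?_⟩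
  · rwa [← sub_neg_eq_add, ← hxy, sub_sub_cancel]
  · exact sub_add_cancel_left x t

theorem exists_unit_inner_add_infDist_le {E : Type*} [NormedAddCommGroup E]
    [InnerProductSpace ℝ E] {K : Set E} (hK : K.Nonempty) (hKc : IsComplete K)
    (hKv : Convex ℝ K) {q : E} (hq : q ∉ K) :
    ∃ c : E, ‖c‖ = 1 ∧ ∀ w ∈ K, ⟪c, q⟫ + infDist q K ≤ ⟪c, w⟫ := by
  obtain ⟨z, hzK, hz⟩ := exists_norm_eq_iInf_of_complete_convex hK hKc hKv q
  have hobtuse := (norm_eq_iInf_iff_real_inner_le_zero hKv hzK).mp hz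
  have hdist : infDist q K = ‖z - q‖ := by
    simp only [infDist_eq_iInf, dist_eq_norm, ← hz, norm_sub_rev]
  have hpos : 0 < ‖z - q‖ := norm_pos_iff.mpr (sub_ne_zero.mpr fun h => hq (h ▸ hzK))
  refine ⟨‖z - q‖⁻¹ • (z - q), by simp [norm_smul, hpos.ne'], fun w hw => ?_⟩
  have hgap : ⟪z - q, q⟫ + ‖z - q‖ ^ 2 ≤ ⟪z - q, w⟫ := by
    have := hobtuse w hw
    rw [← real_inner_self_eq_norm_sq]
    simp only [inner_sub_left, inner_sub_right, real_inner_comm] at this ⊢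
    linarith
  rw [hdist, real_inner_smul_left, real_inner_smul_left]
  calc ‖z - q‖⁻¹ * ⟪z - q, q⟫ + ‖z - q‖
      = ‖z - q‖⁻¹ * (⟪z - q, q⟫ + ‖z - q‖ ^ 2) := by field_simp
    _ ≤ ‖z - q‖⁻¹ * ⟪z - q, w⟫ := by gcongr

section EuclideanSpace

variable {n : ℕ}

local notation "𝔼" => EuclideanSpace ℝ (Fin n)

theorem sd_of_disjoint {C D : Set 𝔼} (h : Disjoint C D) : sd C D = infDist 0 (C - D) := by
  rw [sd, if_pos h, infDist_zero_eq_sInf_norm]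
  congr 1
  ext r
  simp [Set.mem_sub, eq_comm, and_assoc]

theorem sd_of_not_disjoint {C D : Set 𝔼} (h : ¬Disjoint C D) :
    sd C D = -infDist 0 (C - D)ᶜ := by
  rw [sd, if_neg h, infDist_zero_eq_sInf_norm]
  congr 2
  ext r
  simp only [disjoint_image_add_right_iff, Set.mem_ofPred_eq, Set.mem_image, Set.mem_compl_iff]
  exact ⟨fun ⟨t, ht, hK⟩ => ⟨-t, hK, by rw [norm_neg, ht]⟩,
    fun ⟨s, hK, hs⟩ => ⟨-s, by rw [norm_neg, hs], by rwa [neg_neg]⟩⟩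

theorem costFn_sub {C D : Set 𝔼} (hC : C.Nonempty) (hD : D.Nonempty) (hCc : IsCompact C)
    (hDc : IsCompact D) (c : 𝔼) : costFn (C - D) c = costFn C c - suppFn D c := by
  have hcont : Continuous fun x : 𝔼 => ⟪c, x⟫ := continuous_const.inner continuous_id
  have himage : (fun x => ⟪c, x⟫) '' (C - D) =
      (fun x => ⟪c, x⟫) '' C - (fun x => ⟪c, x⟫) '' D :=
    Set.image_sub (innerₛₗ ℝ c)
  rw [costFn, himage]
  exact csInf_sub (hC.image _) (hCc.image hcont).bddBelow (hD.image _) (hDc.image hcont).bddAbove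

variable {K : Set (EuclideanSpace ℝ (Fin n))}

theorem costFn_le_inner_s19 (hKc : IsCompact K) (c : 𝔼) {w : 𝔼} (hw : w ∈ K) :
    costFn K c ≤ ⟪c, w⟫ :=
  csInf_le (hKc.image (continuous_const.inner continuous_id)).bddBelow ⟨w, hw, rfl⟩

theorem le_costFn_iff (hK : K.Nonempty) (hKc : IsCompact K) {c : 𝔼} {a : ℝ} :
    a ≤ costFn K c ↔ ∀ w ∈ K, a ≤ ⟪c, w⟫ := by
  rw [costFn, le_csInf_iff (hKc.image (continuous_const.inner continuous_id)).bddBelow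
    (hK.image _), Set.forall_mem_image]

theorem continuous_costFn_s19 (hKc : IsCompact K) : Continuous (costFn K) :=
  hKc.continuous_sInf (f := fun c x : 𝔼 => ⟪c, x⟫) continuous_inner

theorem smul_notMem_of_lt_costFn (hKc : IsCompact K) {c : 𝔼} (hc : ‖c‖ = 1) {t : ℝ}
    (ht : t < costFn K c) : t • c ∉ K := fun hmem => by
  have := costFn_le_inner_s19 hKc c hmem
  rw [real_inner_smul_right, real_inner_self_eq_norm_sq, hc] at this
  linarith

theorem costFn_le_infDist_zero (hK : K.Nonempty) (hKc : IsCompact K) {c : 𝔼} (hc : ‖c‖ = 1) :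
    costFn K c ≤ infDist 0 K :=
  (le_infDist hK).mpr fun w hw => calc
    costFn K c ≤ ⟪c, w⟫ := costFn_le_inner_s19 hKc c hw
    _ ≤ ‖c‖ * ‖w‖ := real_inner_le_norm c w
    _ = dist 0 w := by rw [hc, one_mul, dist_zero_left]

theorem costFn_le_neg_infDist_zero_compl (hKc : IsCompact K) (h0 : (0 : 𝔼) ∈ K) {c : 𝔼}
    (hc : ‖c‖ = 1) : costFn K c ≤ -infDist 0 Kᶜ := by
  have hnonpos : costFn K c ≤ 0 := by simpa using costFn_le_inner_s19 hKc c h0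
  suffices infDist 0 Kᶜ ≤ -costFn K c by linarith
  refine le_of_forall_pos_le_add fun ε hε => ?_
  calc infDist 0 Kᶜ ≤ dist 0 ((costFn K c - ε) • c) :=
        infDist_le_dist_of_mem (smul_notMem_of_lt_costFn hKc hc (by linarith))
    _ = -costFn K c + ε := by
        rw [dist_zero_left, norm_smul, hc, mul_one, Real.norm_eq_abs, abs_of_neg (by linarith)]
        ring

theorem isGreatest_costFn_of_zero_notMem (hK : K.Nonempty) (hKc : IsCompact K)
    (hKv : Convex ℝ K) (h0 : (0 : 𝔼) ∉ K) :
    IsGreatest {r | ∃ c : 𝔼, ‖c‖ = 1 ∧ r = costFn K c} (infDist 0 K) := by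
  obtain ⟨c, hc, hsep⟩ := exists_unit_inner_add_infDist_le hK hKc.isComplete hKv h0
  refine ⟨⟨c, hc, le_antisymm ?_ (costFn_le_infDist_zero hK hKc hc)⟩, ?_⟩
  · exact (le_costFn_iff hK hKc).mpr fun w hw => by simpa using hsep w hw
  · rintro _ ⟨c', hc', rfl⟩
    exact costFn_le_infDist_zero hK hKc hc'

theorem isGreatest_costFn_of_zero_mem (hn : 0 < n) (hKc : IsCompact K) (hKv : Convex ℝ K)
    (h0 : (0 : 𝔼) ∈ K) :
    IsGreatest {r | ∃ c : 𝔼, ‖c‖ = 1 ∧ r = costFn K c} (-infDist 0 Kᶜ) := by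
  have : Nonempty (Fin n) := ⟨⟨0, hn⟩⟩
  have hK : K.Nonempty := ⟨0, h0⟩
  obtain ⟨c₀, hc₀, hmax⟩ := (isCompact_sphere (0 : 𝔼) 1).exists_isMaxOn
    (NormedSpace.sphere_nonempty.mpr zero_le_one) (continuous_costFn_s19 hKc).continuousOn
  rw [mem_sphere_zero_iff_norm] at hc₀
  have hKcompl : Kᶜ.Nonempty :=
    ⟨_, smul_notMem_of_lt_costFn hKc hc₀ (sub_one_lt (costFn K c₀))⟩
  refine ⟨⟨c₀, hc₀, le_antisymm ?_ (costFn_le_neg_infDist_zero_compl hKc h0 hc₀)⟩, ?_⟩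
  · suffices -costFn K c₀ ≤ infDist 0 Kᶜ by linarith
    refine (le_infDist hKcompl).mpr fun s hs => ?_
    obtain ⟨c, hc, hsep⟩ := exists_unit_inner_add_infDist_le hK hKc.isComplete hKv hs
    have hcs : ⟪c, s⟫ ≤ costFn K c := (le_costFn_iff hK hKc).mpr fun w hw =>
      (le_add_of_nonneg_right infDist_nonneg).trans (hsep w hw)
    have hmax' : costFn K c ≤ costFn K c₀ := hmax (mem_sphere_zero_iff_norm.mpr hc)
    have hnorm : -⟪c, s⟫ ≤ ‖s‖ := by simpa [hc] using real_inner_le_norm c (-s)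
    rw [dist_zero_left]
    linarith
  · rintro _ ⟨c, hc, rfl⟩
    exact costFn_le_neg_infDist_zero_compl hKc h0 hc

end EuclideanSpace

theorem sd_eq_sup_margin {n : ℕ} (hn : 0 < n) (C D : Set (EuclideanSpace ℝ (Fin n)))
    (hC : C.Nonempty) (hD : D.Nonempty) (hCc : IsCompact C) (hDc : IsCompact D)
    (hCv : Convex ℝ C) (hDv : Convex ℝ D) :
    IsGreatest {r : ℝ | ∃ c : EuclideanSpace ℝ (Fin n), ‖c‖ = 1 ∧ r = costFn C c - suppFn D c} (sd C D) := by
  simp_rw [← costFn_sub hC hD hCc hDc]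
  by_cases hCD : Disjoint C D
  · rw [sd_of_disjoint hCD]
    exact isGreatest_costFn_of_zero_notMem (hC.sub hD) (hCc.sub hDc) (hCv.sub hDv)
      fun h0 => Set.zero_mem_sub_iff.mp h0 hCD
  · rw [sd_of_not_disjoint hCD]
    exact isGreatest_costFn_of_zero_mem hn (hCc.sub hDc) (hCv.sub hDv)
      (Set.zero_mem_sub_iff.mpr hCD)
end
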